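/- Let d ≥ 1 and let w : (0,1) × ℝ^d → ℝ be such that w(t,·) is differentiable with Lipschitz gradient for a.e. t, ∇_x w is Carathéodory, and ‖w‖_{1,1} < ∞. For an AC² curve ζ with derivative k write ‖ζ‖_{H¹} := (∫₀¹ |ζ(t)|² dt + ∫₀¹ |k(t)|² dt)^{1/2}. Then for all AC² curves γ¹, γ², η : [0,1] → ℝ^d one has |∫₀¹ (∇_x w(t, γ¹(t)) − ∇_x w(t, γ²(t))) · η(t) dt| ≤ √2 · ‖w‖_{1,1} · ‖γ¹ − γ²‖_{H¹} · ‖η‖_{H¹}. (Global Lipschitz continuity of the derivative of W with respect to the H¹ norm; estimate (gateaux:4) in Proposition A.6.) -/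

import Mathlib

open MeasureTheory Set
open scoped RealInnerProductSpace

/-- A curve `γ : [0,1] → ℝ^d` is AC² with derivative `g` if `g ∈ L²((0,1); ℝ^d)` and
`γ(t) = γ(0) + ∫₀ᵗ g(s) ds` for all `t ∈ [0,1]`. -/
def IsAC2 {d : ℕ} (γ g : ℝ → EuclideanSpace ℝ (Fin d)) : Prop :=
  MemLp g 2 (volume.restrict (Ioc (0:ℝ) 1)) ∧
  ∀ t ∈ Icc (0:ℝ) 1, γ t = γ 0 + ∫ s in (0:ℝ)..t, g s

/-- `u : (0,1) × ℝ^d → F` is Carathéodory: measurable in `t` for every `x`, and continuous in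
`x` for a.e. `t ∈ (0,1)`. -/
def Caratheodory {E F : Type*} [TopologicalSpace E] [TopologicalSpace F] [MeasurableSpace F]
    (u : ℝ → E → F) : Prop :=
  (∀ x, Measurable fun t => u t x) ∧
  ∀ᵐ t ∂(volume.restrict (Ioo (0:ℝ) 1)), Continuous (u t)

/-- The (smallest) Lipschitz constant of a map. -/
noncomputable def lipConst {E F : Type*} [PseudoMetricSpace E] [PseudoMetricSpace F]
    (f : E → F) : ℝ :=
  sInf {K : ℝ | 0 ≤ K ∧ LipschitzWith (Real.toNNReal K) f}

/-- The `C^{1,1}` norm `‖φ‖_{C^{1,1}} := sup|φ| + sup|∇φ| + Lip(∇φ)`. -/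
noncomputable def C11norm {d : ℕ} (φ : EuclideanSpace ℝ (Fin d) → ℝ) : ℝ :=
  (⨆ x, |φ x|) + (⨆ x, ‖gradient φ x‖) + lipConst (gradient φ)

/-- `‖w‖_{1,1} := (∫₀¹ ‖w_t‖²_{C^{1,1}} dt)^{1/2}`. -/
noncomputable def norm11 {d : ℕ} (w : ℝ → EuclideanSpace ℝ (Fin d) → ℝ) : ℝ :=
  Real.sqrt (∫ t in (0:ℝ)..1, (C11norm (w t)) ^ 2)

/-- The `H¹` norm of an AC² curve `ζ` with derivative `k`. -/
noncomputable def H1norm {d : ℕ} (ζ k : ℝ → EuclideanSpace ℝ (Fin d)) : ℝ :=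
  Real.sqrt ((∫ t in (0:ℝ)..1, ‖ζ t‖ ^ 2) + ∫ t in (0:ℝ)..1, ‖k t‖ ^ 2)

/-! For a.e. `t`, the Lipschitz bound on `∇w_t` controls the integrand by
`‖w_t‖_{C^{1,1}} |γ¹(t) − γ²(t)| |η(t)|`. The one-dimensional Sobolev embedding
`sup_{[0,1]} |ζ| ≤ √2 ‖ζ‖_{H¹}` removes `|η(t)|`: compare `ζ(t)` with `ζ(s)` at a point where
`|ζ(s)|²` is at most its mean, and use `(∫₀¹ |k|)² ≤ ∫₀¹ |k|²`. Cauchy–Schwarz in `t` then bounds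
`∫₀¹ ‖w_t‖_{C^{1,1}} |γ¹ − γ²|` by `‖w‖_{1,1} ‖γ¹ − γ²‖_{L²}`. -/

section Integral

variable {α : Type*} [MeasurableSpace α] {μ : Measure α}

theorem integral_mul_le_sqrt_integral_sq_mul_sqrt_integral_sq {f g : α → ℝ}
    (hf0 : 0 ≤ᵐ[μ] f) (hg0 : 0 ≤ᵐ[μ] g) (hf : MemLp f 2 μ) (hg : MemLp g 2 μ) :
    ∫ a, f a * g a ∂μ ≤ √(∫ a, f a ^ 2 ∂μ) * √(∫ a, g a ^ 2 ∂μ) := by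
  have h := integral_mul_le_Lp_mul_Lq_of_nonneg Real.HolderConjugate.two_two hf0 hg0
    (by simpa using hf) (by simpa using hg)
  simpa only [Real.rpow_two, Real.sqrt_eq_rpow] using h

theorem memLp_two_of_integrable_sq {f : α → ℝ} (hf0 : ∀ a, 0 ≤ f a)
    (hf : Integrable (fun a => f a ^ 2) μ) : MemLp f 2 μ := by
  have hsqrt : (fun a => √(f a ^ 2)) = f := funext fun a => Real.sqrt_sq (hf0 a)
  have hmeas : AEStronglyMeasurable f μ := hsqrt ▸ hf.aemeasurable.sqrt.aestronglyMeasurable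
  exact (memLp_two_iff_integrable_sq hmeas).2 hf

theorem sq_integral_le_integral_sq [IsProbabilityMeasure μ] {f : α → ℝ} (hf0 : ∀ a, 0 ≤ f a)
    (hf : MemLp f 2 μ) : (∫ a, f a ∂μ) ^ 2 ≤ ∫ a, f a ^ 2 ∂μ := by
  have hcs := integral_mul_le_sqrt_integral_sq_mul_sqrt_integral_sq
    (.of_forall hf0) (.of_forall fun _ => zero_le_one) hf (memLp_const (1 : ℝ))
  simp only [mul_one, one_pow, integral_const, probReal_univ, smul_eq_mul, Real.sqrt_one] at hcs
  exact (Real.le_sqrt (integral_nonneg hf0) (integral_nonneg fun a => sq_nonneg _)).1 hcs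

end Integral

instance : IsProbabilityMeasure (volume.restrict (Ioc (0:ℝ) 1)) :=
  ⟨by simp [Real.volume_Ioc]⟩

theorem ContinuousOn.exists_mul_le_intervalIntegral {f : ℝ → ℝ} {a b : ℝ} (hab : a ≤ b)
    (hf : ContinuousOn f (Icc a b)) : ∃ s ∈ Icc a b, (b - a) * f s ≤ ∫ x in a..b, f x := by
  obtain ⟨s, hs, hmin⟩ := isCompact_Icc.exists_isMinOn (nonempty_Icc.2 hab) hf
  refine ⟨s, hs, ?_⟩
  calc (b - a) * f s = ∫ _ in a..b, f s := by simp
    _ ≤ ∫ x in a..b, f x :=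
      intervalIntegral.integral_mono_on hab intervalIntegrable_const
        (hf.intervalIntegrable_of_Icc hab) fun x hx => hmin hx

section LipConst

variable {E F : Type*} [PseudoMetricSpace E] [PseudoMetricSpace F] {f : E → F}

theorem lipConst_nonneg (f : E → F) : 0 ≤ lipConst f :=
  Real.sInf_nonneg fun _ hK => hK.1

theorem LipschitzWith.dist_le_lipConst_mul {K : NNReal} (hf : LipschitzWith K f) (x y : E) :
    dist (f x) (f y) ≤ lipConst f * dist x y := by
  rcases (dist_nonneg : 0 ≤ dist x y).eq_or_lt with hxy | hxy
  · simpa only [← hxy, mul_zero] using hf.dist_le_mul x y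
  · have hquot : dist (f x) (f y) / dist x y ≤ lipConst f := by
      refine le_csInf ⟨K, K.coe_nonneg, by rwa [Real.toNNReal_coe]⟩ ?_
      rintro L ⟨hL0, hL⟩
      rw [div_le_iff₀ hxy]
      simpa only [Real.coe_toNNReal L hL0] using hL.dist_le_mul x y
    exact (div_le_iff₀ hxy).1 hquot

end LipConst

section C11norm

variable {d : ℕ}

theorem lipConst_gradient_le_C11norm (φ : EuclideanSpace ℝ (Fin d) → ℝ) :
    lipConst (gradient φ) ≤ C11norm φ := by
  have hsup₀ : 0 ≤ ⨆ x, |φ x| := Real.iSup_nonneg fun _ => abs_nonneg _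
  have hsup₁ : 0 ≤ ⨆ x, ‖gradient φ x‖ := Real.iSup_nonneg fun _ => norm_nonneg _
  unfold C11norm
  linarith

theorem C11norm_nonneg (φ : EuclideanSpace ℝ (Fin d) → ℝ) : 0 ≤ C11norm φ :=
  (lipConst_nonneg _).trans (lipConst_gradient_le_C11norm φ)

theorem norm_gradient_sub_le_C11norm_mul {φ : EuclideanSpace ℝ (Fin d) → ℝ} {K : NNReal}
    (hφ : LipschitzWith K (gradient φ)) (x y : EuclideanSpace ℝ (Fin d)) :
    ‖gradient φ x - gradient φ y‖ ≤ C11norm φ * ‖x - y‖ := by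
  rw [← dist_eq_norm, ← dist_eq_norm]
  exact (hφ.dist_le_lipConst_mul x y).trans
    (mul_le_mul_of_nonneg_right (lipConst_gradient_le_C11norm φ) dist_nonneg)

end C11norm

namespace IsAC2

variable {d : ℕ} {γ g : ℝ → EuclideanSpace ℝ (Fin d)}

theorem intervalIntegrable (hγ : IsAC2 γ g) {a b : ℝ} (ha : a ∈ Icc (0:ℝ) 1)
    (hb : b ∈ Icc (0:ℝ) 1) : IntervalIntegrable g volume a b := by
  rw [intervalIntegrable_iff]
  exact IntegrableOn.mono_set (hγ.1.integrable one_le_two)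
    (Ioc_subset_Ioc (le_inf ha.1 hb.1) (sup_le ha.2 hb.2))

theorem sub {γ₁ g₁ γ₂ g₂ : ℝ → EuclideanSpace ℝ (Fin d)} (h₁ : IsAC2 γ₁ g₁)
    (h₂ : IsAC2 γ₂ g₂) : IsAC2 (fun t => γ₁ t - γ₂ t) (fun t => g₁ t - g₂ t) := by
  have h0 : (0:ℝ) ∈ Icc (0:ℝ) 1 := left_mem_Icc.2 zero_le_one
  refine ⟨h₁.1.sub h₂.1, fun t ht => ?_⟩
  dsimp only
  rw [intervalIntegral.integral_sub (h₁.intervalIntegrable h0 ht) (h₂.intervalIntegrable h0 ht),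
    h₁.2 t ht, h₂.2 t ht]
  abel

theorem continuousOn (hγ : IsAC2 γ g) : ContinuousOn γ (Icc 0 1) := by
  have hprim := intervalIntegral.continuousOn_primitive_interval (a := 0) (b := 1) (μ := volume)
    (f := g) (by simpa [uIcc_of_le zero_le_one, integrableOn_Icc_iff_integrableOn_Ioc] using
      (hγ.intervalIntegrable (left_mem_Icc.2 zero_le_one) (right_mem_Icc.2 zero_le_one)).1)
  rw [uIcc_of_le zero_le_one] at hprim
  exact (continuousOn_const.add hprim).congr hγ.2

theorem norm_sub_le_integral_norm (hγ : IsAC2 γ g) {s t : ℝ} (hs : s ∈ Icc (0:ℝ) 1)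
    (ht : t ∈ Icc (0:ℝ) 1) : ‖γ t - γ s‖ ≤ ∫ u in (0:ℝ)..1, ‖g u‖ := by
  have h0 : (0:ℝ) ∈ Icc (0:ℝ) 1 := left_mem_Icc.2 zero_le_one
  have h1 : (1:ℝ) ∈ Icc (0:ℝ) 1 := right_mem_Icc.2 zero_le_one
  have hdiff : γ t - γ s = ∫ u in s..t, g u := by
    rw [hγ.2 t ht, hγ.2 s hs, ← intervalIntegral.integral_interval_sub_left
      (hγ.intervalIntegrable h0 ht) (hγ.intervalIntegrable h0 hs)]
    abel
  have hnorm : IntervalIntegrable (fun u => ‖g u‖) volume 0 1 :=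
    (hγ.intervalIntegrable h0 h1).norm
  rw [hdiff]
  refine intervalIntegral.norm_integral_le_abs_integral_norm.trans ?_
  rcases le_total s t with hst | hts
  · rw [abs_of_nonneg (intervalIntegral.integral_nonneg hst fun _ _ => norm_nonneg _)]
    exact intervalIntegral.integral_mono_interval hs.1 hst ht.2
      (.of_forall fun _ => norm_nonneg _) hnorm
  · rw [intervalIntegral.integral_symm, abs_neg,
      abs_of_nonneg (intervalIntegral.integral_nonneg hts fun _ _ => norm_nonneg _)]
    exact intervalIntegral.integral_mono_interval ht.1 hts hs.2
      (.of_forall fun _ => norm_nonneg _) hnorm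

theorem norm_le_sqrt_two_mul_H1norm (hγ : IsAC2 γ g) {t : ℝ} (ht : t ∈ Icc (0:ℝ) 1) :
    ‖γ t‖ ≤ √2 * H1norm γ g := by
  obtain ⟨s, hs, hγs⟩ := ContinuousOn.exists_mul_le_intervalIntegral zero_le_one
    (f := fun t => ‖γ t‖ ^ 2) (hγ.continuousOn.norm.pow 2)
  rw [sub_zero, one_mul] at hγs
  have hg : (∫ u in (0:ℝ)..1, ‖g u‖) ^ 2 ≤ ∫ u in (0:ℝ)..1, ‖g u‖ ^ 2 := by
    simpa only [intervalIntegral.integral_of_le zero_le_one] using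
      sq_integral_le_integral_sq (fun _ => norm_nonneg _) hγ.1.norm
  have hg0 : 0 ≤ ∫ u in (0:ℝ)..1, ‖g u‖ :=
    intervalIntegral.integral_nonneg zero_le_one fun _ _ => norm_nonneg _
  have htri : ‖γ t‖ ≤ ‖γ s‖ + ∫ u in (0:ℝ)..1, ‖g u‖ :=
    (norm_le_norm_add_norm_sub' _ _).trans (add_le_add le_rfl (hγ.norm_sub_le_integral_norm hs ht))
  have hsq : ‖γ t‖ ^ 2 ≤ 2 * ((∫ u in (0:ℝ)..1, ‖γ u‖ ^ 2) + ∫ u in (0:ℝ)..1, ‖g u‖ ^ 2) := by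
    nlinarith [sq_nonneg (‖γ s‖ - ∫ u in (0:ℝ)..1, ‖g u‖), norm_nonneg (γ t), norm_nonneg (γ s)]
  rw [H1norm, ← Real.sqrt_mul zero_le_two]
  simpa only [abs_norm] using Real.abs_le_sqrt hsq

theorem memLp_norm (hγ : IsAC2 γ g) :
    MemLp (fun t => ‖γ t‖) 2 (volume.restrict (Ioc (0:ℝ) 1)) :=
  memLp_two_of_integrable_sq (fun _ => norm_nonneg _)
    (((hγ.continuousOn.norm.pow 2).integrableOn_Icc).mono_set Ioc_subset_Icc_self)

theorem integral_mul_norm_le (hγ : IsAC2 γ g) {f : ℝ → ℝ} (hf0 : ∀ t, 0 ≤ f t)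
    (hf : MemLp f 2 (volume.restrict (Ioc (0:ℝ) 1))) :
    ∫ t in (0:ℝ)..1, f t * ‖γ t‖ ≤ √(∫ t in (0:ℝ)..1, f t ^ 2) * H1norm γ g := by
  have hcs := integral_mul_le_sqrt_integral_sq_mul_sqrt_integral_sq (.of_forall hf0)
    (.of_forall fun t => norm_nonneg (γ t)) hf hγ.memLp_norm
  have hg : 0 ≤ ∫ t in (0:ℝ)..1, ‖g t‖ ^ 2 :=
    intervalIntegral.integral_nonneg zero_le_one fun _ _ => sq_nonneg _
  simp only [H1norm, intervalIntegral.integral_of_le zero_le_one] at hg ⊢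
  exact hcs.trans (mul_le_mul_of_nonneg_left (Real.sqrt_le_sqrt (le_add_of_nonneg_right hg))
    (Real.sqrt_nonneg _))

end IsAC2

theorem DW_lipschitz_in_H1_general
    {d : ℕ}
    (w : ℝ → EuclideanSpace ℝ (Fin d) → ℝ)
    (hw : ∀ᵐ t ∂(volume.restrict (Ioo (0:ℝ) 1)),
      Differentiable ℝ (w t) ∧ ∃ K : NNReal, LipschitzWith K (gradient (w t)))
    (hnorm : IntervalIntegrable (fun t => (C11norm (w t)) ^ 2) volume 0 1)
    (γ₁ g₁ γ₂ g₂ η h : ℝ → EuclideanSpace ℝ (Fin d))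
    (hγ₁ : IsAC2 γ₁ g₁) (hγ₂ : IsAC2 γ₂ g₂) (hη : IsAC2 η h) :
    |∫ t in (0:ℝ)..1, ⟪gradient (w t) (γ₁ t) - gradient (w t) (γ₂ t), η t⟫| ≤
      Real.sqrt 2 * norm11 w *
        H1norm (fun t => γ₁ t - γ₂ t) (fun t => g₁ t - g₂ t) * H1norm η h := by
  set C : ℝ → ℝ := fun t => C11norm (w t)
  set Sη := √2 * H1norm η h
  have hδ := hγ₁.sub hγ₂
  have hC : MemLp C 2 (volume.restrict (Ioc (0:ℝ) 1)) :=
    memLp_two_of_integrable_sq (fun t => C11norm_nonneg (w t)) hnorm.1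
  have hbound : ∀ᵐ t, t ∈ Ioc (0:ℝ) 1 →
      ‖⟪gradient (w t) (γ₁ t) - gradient (w t) (γ₂ t), η t⟫‖ ≤ C t * ‖γ₁ t - γ₂ t‖ * Sη := by
    rw [Measure.restrict_congr_set Ioo_ae_eq_Ioc, ae_restrict_iff' measurableSet_Ioc] at hw
    filter_upwards [hw] with t hwt ht
    obtain ⟨K, hK⟩ := (hwt ht).2
    exact (norm_inner_le_norm _ _).trans (mul_le_mul (norm_gradient_sub_le_C11norm_mul hK _ _)
      (hη.norm_le_sqrt_two_mul_H1norm (Ioc_subset_Icc_self ht)) (norm_nonneg _)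
      (mul_nonneg (C11norm_nonneg _) (norm_nonneg _)))
  have hint : IntervalIntegrable (fun t => C t * ‖γ₁ t - γ₂ t‖ * Sη) volume 0 1 :=
    (intervalIntegrable_iff_integrableOn_Ioc_of_le zero_le_one).2
      ((hC.integrable_mul hδ.memLp_norm).mul_const Sη)
  calc |∫ t in (0:ℝ)..1, ⟪gradient (w t) (γ₁ t) - gradient (w t) (γ₂ t), η t⟫|
      ≤ ∫ t in (0:ℝ)..1, C t * ‖γ₁ t - γ₂ t‖ * Sη :=
        intervalIntegral.norm_integral_le_of_norm_le zero_le_one hbound hint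
    _ = (∫ t in (0:ℝ)..1, C t * ‖γ₁ t - γ₂ t‖) * Sη := intervalIntegral.integral_mul_const _ _
    _ ≤ (norm11 w * H1norm (fun t => γ₁ t - γ₂ t) (fun t => g₁ t - g₂ t)) * Sη :=
        mul_le_mul_of_nonneg_right (hδ.integral_mul_norm_le (fun t => C11norm_nonneg _) hC)
          (mul_nonneg (Real.sqrt_nonneg _) (Real.sqrt_nonneg _))
    _ = _ := by ring

/-- Estimate (gateaux:4) in Proposition A.6: Lipschitz continuity of the derivative of `W`,
`|∫₀¹ (∇w_t(γ¹) − ∇w_t(γ²)) · η dt| ≤ √2 ‖w‖₁,₁ ‖γ¹ − γ²‖_{H¹} ‖η‖_{H¹}`. -/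
theorem DW_lipschitz_in_H1
    {d : ℕ} (hd : 1 ≤ d)
    (w : ℝ → EuclideanSpace ℝ (Fin d) → ℝ)
    (hw : ∀ᵐ t ∂(volume.restrict (Ioo (0:ℝ) 1)),
      Differentiable ℝ (w t) ∧ ∃ K : NNReal, LipschitzWith K (gradient (w t)))
    (hCargrad : Caratheodory fun t => gradient (w t))
    (hnorm : IntervalIntegrable (fun t => (C11norm (w t)) ^ 2) volume 0 1)
    (γ₁ g₁ γ₂ g₂ η h : ℝ → EuclideanSpace ℝ (Fin d))
    (hγ₁ : IsAC2 γ₁ g₁) (hγ₂ : IsAC2 γ₂ g₂) (hη : IsAC2 η h) :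
    |∫ t in (0:ℝ)..1, ⟪gradient (w t) (γ₁ t) - gradient (w t) (γ₂ t), η t⟫| ≤
      Real.sqrt 2 * norm11 w *
        H1norm (fun t => γ₁ t - γ₂ t) (fun t => g₁ t - g₂ t) * H1norm η h :=
  DW_lipschitz_in_H1_general w hw hnorm γ₁ g₁ γ₂ g₂ η h hγ₁ hγ₂ hη
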